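/- arXiv:2004.09106 — 2 statements merged into one kernel-verified Lean document; each statement's English description precedes it below -/
import Mathlib

section
/- Let w₁ > ⋯ > w_p > 0 and x ∈ ℝ^p with x₁ ≥ ⋯ ≥ x_k > x_{k+1} ≥ ⋯ ≥ x_p ≥ 0. Then the subdifferential of the SLOPE norm ‖·‖_w at x splits as a product: ∂‖·‖_w(x) = ∂‖·‖_{w_{[1:k]}}(x_{[1:k]}) × ∂‖·‖_{w_{[k+1:p]}}(x_{[k+1:p]}), where w_{[1:k]} and w_{[k+1:p]} are the corresponding subvectors of weights. -/
open Finset Matrix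

noncomputable def dot {p : ℕ} (x y : Fin p → ℝ) : ℝ := ∑ i, x i * y i

noncomputable def slopeNorm {p : ℕ} (w : Fin p → ℝ) (x : Fin p → ℝ) : ℝ :=
  ⨆ π : Equiv.Perm (Fin p), ∑ j, w j * |x (π j)|

def subdiff {p : ℕ} (N : (Fin p → ℝ) → ℝ) (x : Fin p → ℝ) : Set (Fin p → ℝ) :=
  {s | ∀ z, N x + dot s (z - x) ≤ N z}

lemma slope_term_le {p : ℕ} (w z : Fin p → ℝ) (π : Equiv.Perm (Fin p)) :
    ∑ j, w j * |z (π j)| ≤ slopeNorm w z :=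
  le_ciSup (f := fun π : Equiv.Perm (Fin p) => ∑ j, w j * |z (π j)|) (Set.Finite.bddAbove (Set.finite_range _)) π

lemma slope_le {p : ℕ} (w z : Fin p → ℝ) (c : ℝ)
    (h : ∀ π : Equiv.Perm (Fin p), ∑ j, w j * |z (π j)| ≤ c) : slopeNorm w z ≤ c :=
  ciSup_le (f := fun π : Equiv.Perm (Fin p) => ∑ j, w j * |z (π j)|) h

lemma sum_split {p k : ℕ} (hk : k ≤ p) (F : Fin p → ℝ) :
    ∑ j, F j = ∑ i : Fin k, F (Fin.castLE hk i) + ∑ i : Fin (p - k), F ⟨k + i.1, by have := i.isLt; omega⟩ := by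
  have e : k + (p - k) = p := by omega
  rw [← Fintype.sum_equiv (finCongr e) (fun j => F (finCongr e j)) F (fun _ => rfl), Fin.sum_univ_add]
  congr 1

def blockPerm {p k : ℕ} (hk : k ≤ p) (π₁ : Equiv.Perm (Fin k)) (π₂ : Equiv.Perm (Fin (p - k))) :
    Equiv.Perm (Fin p) where
  toFun j := if h : j.1 < k then Fin.castLE hk (π₁ ⟨j.1, h⟩)
    else ⟨k + (π₂ ⟨j.1 - k, by omega⟩).1, by have := (π₂ ⟨j.1 - k, by omega⟩).isLt; omega⟩
  invFun j := if h : j.1 < k then Fin.castLE hk (π₁.symm ⟨j.1, h⟩)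
    else ⟨k + (π₂.symm ⟨j.1 - k, by omega⟩).1, by have := (π₂.symm ⟨j.1 - k, by omega⟩).isLt; omega⟩
  left_inv j := by
    by_cases h : j.1 < k
    · simp [h, (π₁ ⟨j.1, h⟩).isLt]
    · have h2 : ¬ (k + (π₂ ⟨j.1 - k, by omega⟩).1 < k) := by omega
      simp only [dif_neg h, dif_neg h2, Nat.add_sub_cancel_left, Fin.eta,
        Equiv.symm_apply_apply]
      ext; simp; omega
  right_inv j := by
    by_cases h : j.1 < k
    · simp [h, (π₁.symm ⟨j.1, h⟩).isLt]
    · have h2 : ¬ (k + (π₂.symm ⟨j.1 - k, by omega⟩).1 < k) := by omega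
      simp only [dif_neg h, dif_neg h2, Nat.add_sub_cancel_left, Fin.eta,
        Equiv.apply_symm_apply]
      ext; simp; omega

lemma blockPerm_apply1 {p k : ℕ} (hk : k ≤ p) (π₁ : Equiv.Perm (Fin k)) (π₂ : Equiv.Perm (Fin (p - k)))
    (i : Fin k) : blockPerm hk π₁ π₂ (Fin.castLE hk i) = Fin.castLE hk (π₁ i) := by
  have h : (Fin.castLE hk i).1 < k := i.isLt
  simp only [blockPerm, Equiv.coe_fn_mk, dif_pos h]
  congr 1

lemma blockPerm_apply2 {p k : ℕ} (hk : k ≤ p) (π₁ : Equiv.Perm (Fin k)) (π₂ : Equiv.Perm (Fin (p - k)))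
    (i : Fin (p - k)) : blockPerm hk π₁ π₂ ⟨k + i.1, by have := i.isLt; omega⟩ =
      ⟨k + (π₂ i).1, by have := (π₂ i).isLt; omega⟩ := by
  have h : ¬ ((⟨k + i.1, by have := i.isLt; omega⟩ : Fin p).1 < k) := by simp
  simp only [blockPerm, Equiv.coe_fn_mk, dif_neg h]
  ext
  simp

lemma slope_key {p k : ℕ} (hk : k ≤ p) (w z : Fin p → ℝ)
    (π₁ : Equiv.Perm (Fin k)) (π₂ : Equiv.Perm (Fin (p - k))) :
    ∑ i : Fin k, w (Fin.castLE hk i) * |z (Fin.castLE hk (π₁ i))| +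
      ∑ i : Fin (p - k), w ⟨k + i.1, by have := i.isLt; omega⟩ *
        |z ⟨k + (π₂ i).1, by have := (π₂ i).isLt; omega⟩| ≤ slopeNorm w z := by
  have := sum_split hk (fun j => w j * |z (blockPerm hk π₁ π₂ j)|)
  calc ∑ i : Fin k, w (Fin.castLE hk i) * |z (Fin.castLE hk (π₁ i))| +
        ∑ i : Fin (p - k), w ⟨k + i.1, by have := i.isLt; omega⟩ *
          |z ⟨k + (π₂ i).1, by have := (π₂ i).isLt; omega⟩|
      = ∑ j, w j * |z (blockPerm hk π₁ π₂ j)| := by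
        rw [this]
        congr 1
        · exact Finset.sum_congr rfl fun i _ => by rw [blockPerm_apply1]
        · exact Finset.sum_congr rfl fun i _ => by rw [blockPerm_apply2]
    _ ≤ slopeNorm w z := slope_term_le w z _
lemma slope_superadd {p k : ℕ} (hk : k ≤ p) (w z : Fin p → ℝ) :
    slopeNorm (fun i : Fin k => w (Fin.castLE hk i)) (fun i => z (Fin.castLE hk i)) +
      slopeNorm (fun i : Fin (p - k) => w ⟨k + i.1, by have := i.isLt; omega⟩)
        (fun i => z ⟨k + i.1, by have := i.isLt; omega⟩) ≤ slopeNorm w z := by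
  have step1 : ∀ π₁ : Equiv.Perm (Fin k),
      (∑ i : Fin k, w (Fin.castLE hk i) * |z (Fin.castLE hk (π₁ i))|) +
      slopeNorm (fun i : Fin (p - k) => w ⟨k + i.1, by have := i.isLt; omega⟩)
        (fun i => z ⟨k + i.1, by have := i.isLt; omega⟩) ≤ slopeNorm w z := by
    intro π₁
    have h2 : slopeNorm (fun i : Fin (p - k) => w ⟨k + i.1, by have := i.isLt; omega⟩)
        (fun i => z ⟨k + i.1, by have := i.isLt; omega⟩) ≤ slopeNorm w z -
        ∑ i : Fin k, w (Fin.castLE hk i) * |z (Fin.castLE hk (π₁ i))| := by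
      apply slope_le
      intro π₂
      have := slope_key hk w z π₁ π₂
      linarith
    linarith
  have h1 : slopeNorm (fun i : Fin k => w (Fin.castLE hk i)) (fun i => z (Fin.castLE hk i)) ≤
      slopeNorm w z - slopeNorm (fun i : Fin (p - k) => w ⟨k + i.1, by have := i.isLt; omega⟩)
        (fun i => z ⟨k + i.1, by have := i.isLt; omega⟩) := by
    apply slope_le
    intro π₁
    have := step1 π₁
    linarith
  linarith
lemma slope_dom_le {p k : ℕ} (hk2 : k < p) (w z : Fin p → ℝ)
    (hstrict : ∀ i j : Fin p, i < j → w j < w i)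
    (hdom : ∀ (i : Fin k) (j : Fin (p - k)),
      |z ⟨k + j.1, by omega⟩| ≤ |z (Fin.castLE hk2.le i)|) :
    slopeNorm w z ≤
      slopeNorm (fun i : Fin k => w (Fin.castLE hk2.le i)) (fun i => z (Fin.castLE hk2.le i)) +
        slopeNorm (fun i : Fin (p - k) => w ⟨k + i.1, by omega⟩)
          (fun i => z ⟨k + i.1, by omega⟩) := by
  set a : Fin p → ℝ := fun j => |z j| with ha
  set a₁ : Fin k → ℝ := fun i => |z (Fin.castLE hk2.le i)| with ha₁
  set a₂ : Fin (p - k) → ℝ := fun i => |z ⟨k + i.1, by omega⟩| with ha₂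
  set σ₁ : Equiv.Perm (Fin k) := Fin.revPerm.trans (Tuple.sort a₁) with hσ₁
  set σ₂ : Equiv.Perm (Fin (p - k)) := Fin.revPerm.trans (Tuple.sort a₂) with hσ₂
  set σ : Equiv.Perm (Fin p) := blockPerm hk2.le σ₁ σ₂ with hσ
  have anti1 : ∀ m n : Fin k, m ≤ n → a₁ (σ₁ n) ≤ a₁ (σ₁ m) := by
    intro m n hmn
    simp only [hσ₁, Equiv.trans_apply, Fin.revPerm_apply]
    exact Tuple.monotone_sort a₁ (Fin.rev_le_rev.mpr hmn)
  have anti2 : ∀ m n : Fin (p - k), m ≤ n → a₂ (σ₂ n) ≤ a₂ (σ₂ m) := by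
    intro m n hmn
    simp only [hσ₂, Equiv.trans_apply, Fin.revPerm_apply]
    exact Tuple.monotone_sort a₂ (Fin.rev_le_rev.mpr hmn)
  have hs1 : ∀ (j : Fin p) (h : j.1 < k), σ j = Fin.castLE hk2.le (σ₁ ⟨j.1, h⟩) := by
    intro j h
    exact blockPerm_apply1 hk2.le σ₁ σ₂ ⟨j.1, h⟩
  have hs2 : ∀ (j : Fin p) (h : ¬ j.1 < k), a (σ j) = a₂ (σ₂ ⟨j.1 - k, by omega⟩) := by
    intro j h
    have hj : j = (⟨k + (⟨j.1 - k, by omega⟩ : Fin (p - k)).1,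
        by have := (⟨j.1 - k, by omega⟩ : Fin (p - k)).isLt; omega⟩ : Fin p) := by
      ext; simp; omega
    conv_lhs => rw [hj, hσ, blockPerm_apply2]
  have anti : ∀ i j : Fin p, i ≤ j → a (σ j) ≤ a (σ i) := by
    intro i j hij
    by_cases hj : j.1 < k
    · have hi : i.1 < k := by omega
      rw [hs1 j hj, hs1 i hi]
      exact anti1 ⟨i.1, hi⟩ ⟨j.1, hj⟩ hij
    · by_cases hi : i.1 < k
      · rw [hs2 j hj, hs1 i hi]
        exact hdom (σ₁ ⟨i.1, hi⟩) (σ₂ ⟨j.1 - k, by omega⟩)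
      · rw [hs2 j hj, hs2 i hi]
        exact anti2 ⟨i.1 - k, by omega⟩ ⟨j.1 - k, by omega⟩ (by simp [Fin.le_def]; omega)
  have mv : Monovary w (fun j => a (σ j)) := by
    intro i j hlt
    rcases lt_or_ge j i with h | h
    · exact (hstrict j i h).le
    · exact absurd hlt (not_lt.2 (anti i j h))
  apply slope_le
  intro π
  have c1 : ∑ j, w j * |z (π j)| = ∑ j, w j * (fun j' => a (σ j')) ((π.trans σ.symm) j) := by
    refine Finset.sum_congr rfl fun j _ => ?_
    simp only [Equiv.trans_apply, Equiv.apply_symm_apply, ha]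
  have c2 : ∑ j, w j * (fun j' => a (σ j')) ((π.trans σ.symm) j) ≤ ∑ j, w j * (fun j' => a (σ j')) j :=
    mv.sum_mul_comp_perm_le_sum_mul
  have c3 : ∑ j, w j * a (σ j) = ∑ i : Fin k, (fun i' : Fin k => w (Fin.castLE hk2.le i')) i *
          |(fun i' => z (Fin.castLE hk2.le i')) (σ₁ i)| +
        ∑ i : Fin (p - k), (fun i' : Fin (p - k) => w ⟨k + i'.1, by omega⟩) i *
          |(fun i' => z ⟨k + i'.1, by omega⟩) (σ₂ i)| := by
    rw [sum_split hk2.le (fun j => w j * a (σ j))]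
    congr 1
    · refine Finset.sum_congr rfl fun i _ => ?_
      rw [hs1 (Fin.castLE hk2.le i) i.isLt]
      simp [ha]
    · refine Finset.sum_congr rfl fun i _ => ?_
      rw [hs2 ⟨k + i.1, by omega⟩ (by simp)]
      simp [ha₂]
  have c4 : ∑ i : Fin k, (fun i' : Fin k => w (Fin.castLE hk2.le i')) i *
        |(fun i' => z (Fin.castLE hk2.le i')) (σ₁ i)| ≤
      slopeNorm (fun i : Fin k => w (Fin.castLE hk2.le i)) (fun i => z (Fin.castLE hk2.le i)) :=
    slope_term_le (fun i : Fin k => w (Fin.castLE hk2.le i)) (fun i => z (Fin.castLE hk2.le i)) σ₁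
  have c5 : ∑ i : Fin (p - k), (fun i' : Fin (p - k) => w ⟨k + i'.1, by omega⟩) i *
        |(fun i' => z ⟨k + i'.1, by omega⟩) (σ₂ i)| ≤
      slopeNorm (fun i : Fin (p - k) => w ⟨k + i.1, by omega⟩)
        (fun i => z ⟨k + i.1, by omega⟩) :=
    slope_term_le (fun i : Fin (p - k) => w ⟨k + i.1, by omega⟩)
      (fun i => z ⟨k + i.1, by omega⟩) σ₂
  linarith

lemma slope_convex {p : ℕ} (w a b : Fin p → ℝ) (hw : ∀ i, 0 ≤ w i) (t : ℝ)
    (h0 : 0 ≤ t) (h1 : t ≤ 1) :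
    slopeNorm w (fun i => (1 - t) * a i + t * b i) ≤
      (1 - t) * slopeNorm w a + t * slopeNorm w b := by
  apply slope_le
  intro π
  have step : ∀ j : Fin p, w j * |(1 - t) * a (π j) + t * b (π j)| ≤
      (1 - t) * (w j * |a (π j)|) + t * (w j * |b (π j)|) := by
    intro j
    have habs : |(1 - t) * a (π j) + t * b (π j)| ≤ (1 - t) * |a (π j)| + t * |b (π j)| := by
      calc |(1 - t) * a (π j) + t * b (π j)| ≤ |(1 - t) * a (π j)| + |t * b (π j)| := abs_add_le _ _
        _ = (1 - t) * |a (π j)| + t * |b (π j)| := by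
            rw [abs_mul, abs_mul, abs_of_nonneg (by linarith), abs_of_nonneg h0]
    nlinarith [hw j, abs_nonneg (a (π j)), abs_nonneg (b (π j))]
  calc ∑ j, w j * |(1 - t) * a (π j) + t * b (π j)|
      ≤ ∑ j, ((1 - t) * (w j * |a (π j)|) + t * (w j * |b (π j)|)) :=
        Finset.sum_le_sum fun j _ => step j
    _ = (1 - t) * ∑ j, w j * |a (π j)| + t * ∑ j, w j * |b (π j)| := by
        rw [Finset.sum_add_distrib, Finset.mul_sum, Finset.mul_sum]
    _ ≤ (1 - t) * slopeNorm w a + t * slopeNorm w b := by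
        have := slope_term_le w a π
        have := slope_term_le w b π
        nlinarith

theorem slope_subdiff_product_split {p : ℕ} (w : Fin p → ℝ)
    (hstrict : ∀ i j : Fin p, i < j → w j < w i) (hpos : ∀ i, 0 < w i)
    (k : ℕ) (hk1 : 1 ≤ k) (hk2 : k < p) (x : Fin p → ℝ)
    (hsort : ∀ i j : Fin p, i ≤ j → x j ≤ x i) (hnonneg : ∀ i, 0 ≤ x i)
    (hgap : x ⟨k, hk2⟩ < x ⟨k - 1, by omega⟩) :
    subdiff (slopeNorm w) x =
      {s : Fin p → ℝ |
        (fun i : Fin k => s (Fin.castLE hk2.le i)) ∈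
          subdiff (slopeNorm fun i : Fin k => w (Fin.castLE hk2.le i))
            (fun i : Fin k => x (Fin.castLE hk2.le i)) ∧
        (fun i : Fin (p - k) => s ⟨k + i.1, by have := i.isLt; omega⟩) ∈
          subdiff (slopeNorm fun i : Fin (p - k) => w ⟨k + i.1, by have := i.isLt; omega⟩)
            (fun i : Fin (p - k) => x ⟨k + i.1, by have := i.isLt; omega⟩)} := by
  have domx : ∀ (i : Fin k) (j : Fin (p - k)),
      |x ⟨k + j.1, by have := j.isLt; omega⟩| ≤ |x (Fin.castLE hk2.le i)| := by
    intro i j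
    rw [abs_of_nonneg (hnonneg _), abs_of_nonneg (hnonneg _)]
    exact hsort (Fin.castLE hk2.le i) ⟨k + j.1, by have := j.isLt; omega⟩
      (by have := i.isLt; simp only [Fin.le_def, Fin.coe_castLE]; omega)
  have hNx : slopeNorm w x =
      slopeNorm (fun i : Fin k => w (Fin.castLE hk2.le i)) (fun i => x (Fin.castLE hk2.le i)) +
        slopeNorm (fun i : Fin (p - k) => w ⟨k + i.1, by have := i.isLt; omega⟩)
          (fun i => x ⟨k + i.1, by have := i.isLt; omega⟩) :=
    le_antisymm (slope_dom_le hk2 w x hstrict domx) (slope_superadd hk2.le w x)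
  ext s
  simp only [Set.mem_setOf_eq, subdiff]
  constructor
  · intro hs
    constructor
    · intro z₁
      have hne : (univ : Finset (Fin k)).Nonempty := ⟨⟨0, hk1⟩, mem_univ _⟩
      set M := univ.sup' hne (fun i => |z₁ i - x (Fin.castLE hk2.le i)|) with hM
      have hMi : ∀ i : Fin k, |z₁ i - x (Fin.castLE hk2.le i)| ≤ M := by
        intro i; exact Finset.le_sup' (fun i => |z₁ i - x (Fin.castLE hk2.le i)|) (mem_univ i)
      have hM0 : 0 ≤ M := le_trans (abs_nonneg _) (hMi ⟨0, hk1⟩)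
      have hg : 0 < x ⟨k - 1, by omega⟩ - x ⟨k, hk2⟩ := sub_pos.mpr hgap
      set t := min 1 ((x ⟨k - 1, by omega⟩ - x ⟨k, hk2⟩) / (M + 1)) with htdef
      have ht0 : 0 < t := lt_min one_pos (div_pos hg (by linarith))
      have ht1 : t ≤ 1 := min_le_left _ _
      have htM : t * M ≤ x ⟨k - 1, by omega⟩ - x ⟨k, hk2⟩ := by
        calc t * M ≤ ((x ⟨k - 1, by omega⟩ - x ⟨k, hk2⟩) / (M + 1)) * M :=
              mul_le_mul_of_nonneg_right (min_le_right _ _) hM0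
          _ ≤ x ⟨k - 1, by omega⟩ - x ⟨k, hk2⟩ := by
              rw [div_mul_eq_mul_div, div_le_iff₀ (by linarith : (0:ℝ) < M + 1)]
              nlinarith
      set zz : Fin p → ℝ :=
        fun j => if h : j.1 < k then (1 - t) * x j + t * z₁ ⟨j.1, h⟩ else x j with hzz
      have hzz1 : ∀ i : Fin k,
          zz (Fin.castLE hk2.le i) = (1 - t) * x (Fin.castLE hk2.le i) + t * z₁ i := by
        intro i
        have h : (Fin.castLE hk2.le i).1 < k := i.isLt
        simp only [hzz, dif_pos h]
        have he : (⟨(Fin.castLE hk2.le i).1, h⟩ : Fin k) = i := Fin.ext rfl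
        rw [he]
      have hzz2 : ∀ j : Fin (p - k),
          zz ⟨k + j.1, by have := j.isLt; omega⟩ = x ⟨k + j.1, by have := j.isLt; omega⟩ := by
        intro j
        have h : ¬ ((⟨k + j.1, by have := j.isLt; omega⟩ : Fin p).1 < k) := by simp
        simp only [hzz, dif_neg h]
      have hlb : ∀ i : Fin k, x ⟨k, hk2⟩ ≤ zz (Fin.castLE hk2.le i) := by
        intro i
        rw [hzz1]
        have h1 : x ⟨k - 1, by omega⟩ ≤ x (Fin.castLE hk2.le i) :=
          hsort (Fin.castLE hk2.le i) ⟨k - 1, by omega⟩ (by have := i.isLt; simp only [Fin.le_def, Fin.coe_castLE]; omega)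
        have h2 := abs_le.mp (hMi i)
        nlinarith [ht0.le]
      have domzz : ∀ (i : Fin k) (j : Fin (p - k)),
          |zz ⟨k + j.1, by have := j.isLt; omega⟩| ≤ |zz (Fin.castLE hk2.le i)| := by
        intro i j
        rw [hzz2 j, abs_of_nonneg (hnonneg _),
          abs_of_nonneg (le_trans (hnonneg ⟨k, hk2⟩) (hlb i))]
        exact le_trans (hsort ⟨k, hk2⟩ ⟨k + j.1, by have := j.isLt; omega⟩
          (by have := i.isLt; simp only [Fin.le_def, Fin.coe_castLE]; omega)) (hlb i)
      have hNzz : slopeNorm w zz =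
          slopeNorm (fun i : Fin k => w (Fin.castLE hk2.le i)) (fun i => zz (Fin.castLE hk2.le i)) +
            slopeNorm (fun i : Fin (p - k) => w ⟨k + i.1, by have := i.isLt; omega⟩)
              (fun i => zz ⟨k + i.1, by have := i.isLt; omega⟩) :=
        le_antisymm (slope_dom_le hk2 w zz hstrict domzz) (slope_superadd hk2.le w zz)
      have hx2eq : (fun j : Fin (p - k) => zz ⟨k + j.1, by have := j.isLt; omega⟩) =
          (fun j => x ⟨k + j.1, by have := j.isLt; omega⟩) := funext hzz2
      have hx1eq : (fun i : Fin k => zz (Fin.castLE hk2.le i)) =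
          (fun i => (1 - t) * x (Fin.castLE hk2.le i) + t * z₁ i) := funext hzz1
      have hdotzz : dot s (zz - x) =
          t * dot (fun i : Fin k => s (Fin.castLE hk2.le i))
            (z₁ - fun i => x (Fin.castLE hk2.le i)) := by
        simp only [dot, Pi.sub_apply]
        rw [sum_split hk2.le (fun j => s j * (zz j - x j)), Finset.mul_sum]
        have hzero : ∀ j : Fin (p - k),
            s ⟨k + j.1, by have := j.isLt; omega⟩ *
              (zz ⟨k + j.1, by have := j.isLt; omega⟩ - x ⟨k + j.1, by have := j.isLt; omega⟩) = 0 := by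
          intro j; rw [hzz2]; ring
        rw [Finset.sum_congr rfl (fun j _ => hzero j), Finset.sum_const, smul_zero, add_zero]
        refine Finset.sum_congr rfl fun i _ => ?_
        rw [hzz1]
        ring
      have conv := slope_convex (fun i : Fin k => w (Fin.castLE hk2.le i))
        (fun i => x (Fin.castLE hk2.le i)) z₁ (fun i => (hpos _).le) t ht0.le ht1
      have key := hs zz
      rw [hNx, hNzz, hx2eq, hx1eq, hdotzz] at key
      have final : t * (slopeNorm (fun i : Fin k => w (Fin.castLE hk2.le i))
            (fun i => x (Fin.castLE hk2.le i)) +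
          dot (fun i : Fin k => s (Fin.castLE hk2.le i)) (z₁ - fun i => x (Fin.castLE hk2.le i))) ≤
          t * slopeNorm (fun i : Fin k => w (Fin.castLE hk2.le i)) z₁ := by
        nlinarith
      have := le_of_mul_le_mul_left (by linarith : t * _ ≤ t * _) ht0
      linarith [(mul_le_mul_iff_right₀ ht0).mp final]
    · intro z₂
      have hne : (univ : Finset (Fin (p - k))).Nonempty := ⟨⟨0, by omega⟩, mem_univ _⟩
      set M := univ.sup' hne
        (fun j => |z₂ j - x ⟨k + j.1, by have := j.isLt; omega⟩|) with hM
      have hMi : ∀ j : Fin (p - k), |z₂ j - x ⟨k + j.1, by have := j.isLt; omega⟩| ≤ M := by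
        intro j
        exact Finset.le_sup'
          (fun j : Fin (p - k) => |z₂ j - x ⟨k + j.1, by have := j.isLt; omega⟩|) (mem_univ j)
      have hM0 : 0 ≤ M := le_trans (abs_nonneg _) (hMi ⟨0, by omega⟩)
      have hg : 0 < x ⟨k - 1, by omega⟩ - x ⟨k, hk2⟩ := sub_pos.mpr hgap
      set t := min 1 ((x ⟨k - 1, by omega⟩ - x ⟨k, hk2⟩) / (M + 1)) with htdef
      have ht0 : 0 < t := lt_min one_pos (div_pos hg (by linarith))
      have ht1 : t ≤ 1 := min_le_left _ _
      have htM : t * M ≤ x ⟨k - 1, by omega⟩ - x ⟨k, hk2⟩ := by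
        calc t * M ≤ ((x ⟨k - 1, by omega⟩ - x ⟨k, hk2⟩) / (M + 1)) * M :=
              mul_le_mul_of_nonneg_right (min_le_right _ _) hM0
          _ ≤ x ⟨k - 1, by omega⟩ - x ⟨k, hk2⟩ := by
              rw [div_mul_eq_mul_div, div_le_iff₀ (by linarith : (0:ℝ) < M + 1)]
              nlinarith
      set zz : Fin p → ℝ :=
        fun j => if h : j.1 < k then x j
          else (1 - t) * x j + t * z₂ ⟨j.1 - k, by omega⟩ with hzz
      have hzz1 : ∀ i : Fin k, zz (Fin.castLE hk2.le i) = x (Fin.castLE hk2.le i) := by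
        intro i
        have h : (Fin.castLE hk2.le i).1 < k := i.isLt
        simp only [hzz, dif_pos h]
      have hzz2 : ∀ j : Fin (p - k),
          zz ⟨k + j.1, by have := j.isLt; omega⟩ =
            (1 - t) * x ⟨k + j.1, by have := j.isLt; omega⟩ + t * z₂ j := by
        intro j
        have h : ¬ ((⟨k + j.1, by have := j.isLt; omega⟩ : Fin p).1 < k) := by simp
        simp only [hzz, dif_neg h]
        have he : (⟨(⟨k + j.1, by have := j.isLt; omega⟩ : Fin p).1 - k, by
            simp⟩ : Fin (p - k)) = j := Fin.ext (by simp)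
        rw [he]
      have hub : ∀ j : Fin (p - k),
          |zz ⟨k + j.1, by have := j.isLt; omega⟩| ≤ x ⟨k - 1, by omega⟩ := by
        intro j
        rw [hzz2 j]
        have h1 : x ⟨k + j.1, by have := j.isLt; omega⟩ ≤ x ⟨k, hk2⟩ :=
          hsort ⟨k, hk2⟩ ⟨k + j.1, by have := j.isLt; omega⟩ (by
            simp only [Fin.le_def]; omega)
        have h2 := abs_le.mp (hMi j)
        have h3 := hnonneg (⟨k + j.1, by have := j.isLt; omega⟩ : Fin p)
        rw [abs_le]
        constructor <;> nlinarith [ht0.le]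
      have domzz : ∀ (i : Fin k) (j : Fin (p - k)),
          |zz ⟨k + j.1, by have := j.isLt; omega⟩| ≤ |zz (Fin.castLE hk2.le i)| := by
        intro i j
        rw [hzz1 i, abs_of_nonneg (hnonneg _)]
        refine le_trans (hub j) ?_
        exact hsort (Fin.castLE hk2.le i) ⟨k - 1, by omega⟩ (by
          have := i.isLt; simp only [Fin.le_def, Fin.coe_castLE]; omega)
      have hNzz : slopeNorm w zz =
          slopeNorm (fun i : Fin k => w (Fin.castLE hk2.le i)) (fun i => zz (Fin.castLE hk2.le i)) +
            slopeNorm (fun i : Fin (p - k) => w ⟨k + i.1, by have := i.isLt; omega⟩)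
              (fun i => zz ⟨k + i.1, by have := i.isLt; omega⟩) :=
        le_antisymm (slope_dom_le hk2 w zz hstrict domzz) (slope_superadd hk2.le w zz)
      have hx1eq : (fun i : Fin k => zz (Fin.castLE hk2.le i)) =
          (fun i => x (Fin.castLE hk2.le i)) := funext hzz1
      have hx2eq : (fun j : Fin (p - k) => zz ⟨k + j.1, by have := j.isLt; omega⟩) =
          (fun j => (1 - t) * x ⟨k + j.1, by have := j.isLt; omega⟩ + t * z₂ j) := funext hzz2
      have hdotzz : dot s (zz - x) =
          t * dot (fun i : Fin (p - k) => s ⟨k + i.1, by have := i.isLt; omega⟩)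
            (z₂ - fun i => x ⟨k + i.1, by have := i.isLt; omega⟩) := by
        simp only [dot, Pi.sub_apply]
        rw [sum_split hk2.le (fun j => s j * (zz j - x j)), Finset.mul_sum]
        have hzero : ∀ i : Fin k,
            s (Fin.castLE hk2.le i) * (zz (Fin.castLE hk2.le i) - x (Fin.castLE hk2.le i)) = 0 := by
          intro i; rw [hzz1]; ring
        rw [Finset.sum_congr rfl (fun i _ => hzero i), Finset.sum_const, smul_zero, zero_add]
        refine Finset.sum_congr rfl fun j _ => ?_
        rw [hzz2]
        ring
      have conv := slope_convex (fun i : Fin (p - k) => w ⟨k + i.1, by have := i.isLt; omega⟩)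
        (fun i => x ⟨k + i.1, by have := i.isLt; omega⟩) z₂ (fun i => (hpos _).le) t ht0.le ht1
      have key := hs zz
      rw [hNx, hNzz, hx1eq, hx2eq, hdotzz] at key
      have final : t * (slopeNorm (fun i : Fin (p - k) => w ⟨k + i.1, by have := i.isLt; omega⟩)
            (fun i => x ⟨k + i.1, by have := i.isLt; omega⟩) +
          dot (fun i : Fin (p - k) => s ⟨k + i.1, by have := i.isLt; omega⟩)
            (z₂ - fun i => x ⟨k + i.1, by have := i.isLt; omega⟩)) ≤
          t * slopeNorm (fun i : Fin (p - k) => w ⟨k + i.1, by have := i.isLt; omega⟩) z₂ := by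
        nlinarith
      linarith [(mul_le_mul_iff_right₀ ht0).mp final]
  · rintro ⟨h1, h2⟩ z
    have e1 := h1 (fun i => z (Fin.castLE hk2.le i))
    have e2 := h2 (fun i => z ⟨k + i.1, by have := i.isLt; omega⟩)
    have hsup := slope_superadd hk2.le w z
    have hdot : dot s (z - x) =
        dot (fun i : Fin k => s (Fin.castLE hk2.le i))
          ((fun i => z (Fin.castLE hk2.le i)) - fun i => x (Fin.castLE hk2.le i)) +
        dot (fun i : Fin (p - k) => s ⟨k + i.1, by have := i.isLt; omega⟩)
          ((fun i => z ⟨k + i.1, by have := i.isLt; omega⟩) -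
            fun i => x ⟨k + i.1, by have := i.isLt; omega⟩) := by
      simp only [dot, Pi.sub_apply]
      exact sum_split hk2.le (fun j => s j * (z j - x j))
    linarith
end

section
/- Let X ∈ ℝ^{n×p} and ‖·‖ a norm on ℝ^p, and define the convex null set A∅ = {u ∈ ℝ^n : ‖X'u‖* ≤ 1}. Then (i) for every u ∈ A∅, the unique minimizer of b ↦ (1/2)‖u − Xb‖₂² + ‖b‖ is 0; and (ii) for any y ∈ ℝ^n and any minimizer β̂ of b ↦ (1/2)‖y − Xb‖₂² + ‖b‖, the residual û = y − Xβ̂ lies in A∅ and is the Euclidean projection of y onto A∅. -/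
open Finset Matrix

structure IsNorm {p : ℕ} (N : (Fin p → ℝ) → ℝ) : Prop where
  nonneg : ∀ x, 0 ≤ N x
  eq_zero_iff : ∀ x, N x = 0 ↔ x = 0
  smul : ∀ (c : ℝ) (x), N (c • x) = |c| * N x
  triangle : ∀ x y, N (x + y) ≤ N x + N y

noncomputable def dualNorm {p : ℕ} (N : (Fin p → ℝ) → ℝ) (x : Fin p → ℝ) : ℝ :=
  sSup {r | ∃ s, N s ≤ 1 ∧ r = dot s x}

noncomputable def obj {n p : ℕ} (X : Matrix (Fin n) (Fin p) ℝ) (N : (Fin p → ℝ) → ℝ)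
    (y : Fin n → ℝ) (b : Fin p → ℝ) : ℝ :=
  (1/2) * ∑ i, (y i - X.mulVec b i)^2 + N b

def EN (p : ℕ) := Fin p → ℝ
noncomputable instance {p : ℕ} : AddCommGroup (EN p) := inferInstanceAs (AddCommGroup (Fin p → ℝ))
noncomputable instance {p : ℕ} : Module ℝ (EN p) := inferInstanceAs (Module ℝ (Fin p → ℝ))
instance {p : ℕ} : FiniteDimensional ℝ (EN p) := inferInstanceAs (FiniteDimensional ℝ (Fin p → ℝ))

lemma dot_add_left {p : ℕ} (x y v : Fin p → ℝ) : dot (x + y) v = dot x v + dot y v := by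
  simp [dot, add_mul, Finset.sum_add_distrib]

lemma dot_smul_left {p : ℕ} (c : ℝ) (x v : Fin p → ℝ) : dot (c • x) v = c * dot x v := by
  simp [dot, Finset.mul_sum, mul_assoc]

lemma dot_sub_right {p : ℕ} (x a b : Fin p → ℝ) : dot x (a - b) = dot x a - dot x b := by
  simp [dot, mul_sub, Finset.sum_sub_distrib]

lemma bddAbove_dual {p : ℕ} {N : (Fin p → ℝ) → ℝ} (hN : IsNorm N) (v : Fin p → ℝ) :
    BddAbove {r | ∃ s, N s ≤ 1 ∧ r = dot s v} := by
  letI : NormedAddCommGroup (EN p) := AddGroupNorm.toNormedAddCommGroup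
    { toFun := N
      map_zero' := (hN.eq_zero_iff 0).mpr rfl
      add_le' := hN.triangle
      neg' := fun x => by
        have := hN.smul (-1) x
        simp only [abs_neg, abs_one, one_mul] at this
        exact (congrArg N (neg_one_smul ℝ x).symm).trans this
      eq_zero_of_map_eq_zero' := fun x h => (hN.eq_zero_iff x).mp h }
  letI : NormedSpace ℝ (EN p) := ⟨fun c x => le_of_eq (hN.smul c x)⟩
  let f : EN p →ₗ[ℝ] ℝ :=
    { toFun := fun s => dot s v
      map_add' := fun x y => dot_add_left x y v
      map_smul' := fun c x => dot_smul_left c x v }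
  let F := LinearMap.toContinuousLinearMap f
  have key : ∀ s : EN p, dot s v ≤ ‖F‖ * N s := fun s =>
    le_trans (le_abs_self _) (F.le_opNorm s)
  refine ⟨‖F‖, ?_⟩
  rintro r ⟨s, hs, rfl⟩
  have h3 : dot s v ≤ ‖F‖ * N s := key s
  have h4 : ‖F‖ * N s ≤ ‖F‖ * 1 := mul_le_mul_of_nonneg_left hs (norm_nonneg F)
  linarith

lemma dot_mulVec {n p : ℕ} (X : Matrix (Fin n) (Fin p) ℝ) (s : Fin p → ℝ) (u : Fin n → ℝ) :
    dot (X.mulVec s) u = dot s (Xᵀ.mulVec u) := by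
  simp only [dot, Matrix.mulVec, dotProduct, Matrix.transpose_apply,
    Finset.sum_mul, Finset.mul_sum]
  rw [Finset.sum_comm]
  exact Finset.sum_congr rfl fun j _ => Finset.sum_congr rfl fun i _ => by ring

lemma dot_le_of_dual {p : ℕ} {N : (Fin p → ℝ) → ℝ} (hN : IsNorm N) {v : Fin p → ℝ}
    (hv : dualNorm N v ≤ 1) (s : Fin p → ℝ) : dot s v ≤ N s := by
  by_cases h0 : N s = 0
  · have hs : s = 0 := (hN.eq_zero_iff s).mp h0
    subst hs
    simp only [dot, Pi.zero_apply, zero_mul, Finset.sum_const_zero]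
    exact hN.nonneg 0
  · have hpos : 0 < N s := lt_of_le_of_ne (hN.nonneg s) (Ne.symm h0)
    have hmem : (N s)⁻¹ * dot s v ∈ {r | ∃ s', N s' ≤ 1 ∧ r = dot s' v} := by
      refine ⟨(N s)⁻¹ • s, ?_, ?_⟩
      · rw [hN.smul, abs_of_pos (inv_pos.mpr hpos), inv_mul_cancel₀ h0]
      · rw [dot_smul_left]
    have hle : (N s)⁻¹ * dot s v ≤ dualNorm N v := le_csSup (bddAbove_dual hN v) hmem
    have h1 : (N s)⁻¹ * dot s v ≤ 1 := le_trans hle hv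
    have h2 := mul_le_mul_of_nonneg_left h1 hpos.le
    rw [mul_one, ← mul_assoc, mul_inv_cancel₀ h0, one_mul] at h2
    exact h2

lemma le_of_forall_small (a b C : ℝ) (h : ∀ t : ℝ, 0 < t → t < 1 → a ≤ b + t * C) : a ≤ b := by
  by_contra hc
  push_neg at hc
  rcases le_or_gt C 0 with hC | hC
  · have := h (1/2) (by norm_num) (by norm_num)
    nlinarith
  · have hq : 0 < (a - b) / (2 * C) := div_pos (by linarith) (by linarith)
    set t := min (1/2 : ℝ) ((a - b) / (2 * C)) with ht
    have ht0 : 0 < t := lt_min (by norm_num) hq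
    have ht1 : t < 1 := lt_of_le_of_lt (min_le_left _ _) (by norm_num)
    have h2 := h t ht0 ht1
    have h3 : t ≤ (a - b) / (2 * C) := min_le_right _ _
    have h4 : t * C ≤ ((a - b) / (2 * C)) * C := mul_le_mul_of_nonneg_right h3 hC.le
    have h5 : ((a - b) / (2 * C)) * C = (a - b) / 2 := by
      field_simp
    linarith

lemma sq_expand {n : ℕ} (a b : Fin n → ℝ) (t : ℝ) :
    ∑ i, (a i - t * b i)^2 = ∑ i, (a i)^2 - 2*t*(dot b a) + t^2 * ∑ i, (b i)^2 := by
  simp only [dot, Finset.mul_sum, ← Finset.sum_sub_distrib, ← Finset.sum_add_distrib]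
  exact Finset.sum_congr rfl fun i _ => by ring

lemma obj_at {n p : ℕ} (X : Matrix (Fin n) (Fin p) ℝ) (N : (Fin p → ℝ) → ℝ)
    (y β : _) : obj X N y β = (1/2) * ∑ i, ((y - X.mulVec β) i)^2 + N β := by
  unfold obj
  congr 2

lemma cond1 {n p : ℕ} (X : Matrix (Fin n) (Fin p) ℝ) {N : (Fin p → ℝ) → ℝ} (hN : IsNorm N)
    (y : Fin n → ℝ) (β : Fin p → ℝ) (hmin : ∀ b, obj X N y β ≤ obj X N y b) (s : Fin p → ℝ) :
    dot s (Xᵀ.mulVec (y - X.mulVec β)) ≤ N s := by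
  rw [← dot_mulVec]
  set u := y - X.mulVec β with hu
  apply le_of_forall_small _ _ ((1/2) * ∑ i, (X.mulVec s i)^2)
  intro t ht0 ht1
  have h := hmin (β + t • s)
  have hObj : obj X N y (β + t • s) =
      (1/2) * (∑ i, (u i)^2 - 2*t*(dot (X.mulVec s) u) + t^2 * ∑ i, (X.mulVec s i)^2)
        + N (β + t • s) := by
    unfold obj
    rw [← sq_expand]
    congr 1
    congr 1
    apply Finset.sum_congr rfl
    intro i _
    rw [Matrix.mulVec_add, Matrix.mulVec_smul]
    simp [hu]
    ring
  have hObjβ : obj X N y β = (1/2) * ∑ i, (u i)^2 + N β := obj_at X N y β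
  rw [hObj, hObjβ] at h
  have htri : N (β + t • s) ≤ N β + t * N s := by
    calc N (β + t • s) ≤ N β + N (t • s) := hN.triangle _ _
      _ = N β + |t| * N s := by rw [hN.smul]
      _ = N β + t * N s := by rw [abs_of_pos ht0]
  have key : t * dot (X.mulVec s) u ≤ t * (N s + t * ((1/2) * ∑ i, (X.mulVec s i)^2)) := by
    nlinarith [h, htri]
  exact le_of_mul_le_mul_left key ht0

lemma cond2 {n p : ℕ} (X : Matrix (Fin n) (Fin p) ℝ) {N : (Fin p → ℝ) → ℝ} (hN : IsNorm N)
    (y : Fin n → ℝ) (β : Fin p → ℝ) (hmin : ∀ b, obj X N y β ≤ obj X N y b) :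
    N β ≤ dot β (Xᵀ.mulVec (y - X.mulVec β)) := by
  rw [← dot_mulVec]
  set u := y - X.mulVec β with hu
  apply le_of_forall_small _ _ ((1/2) * ∑ i, (X.mulVec β i)^2)
  intro t ht0 ht1
  have h := hmin ((1 - t) • β)
  have hObj : obj X N y ((1 - t) • β) =
      (1/2) * (∑ i, (u i)^2 - 2*(-t)*(dot (X.mulVec β) u) + (-t)^2 * ∑ i, (X.mulVec β i)^2)
        + N ((1 - t) • β) := by
    unfold obj
    rw [← sq_expand]
    congr 1
    congr 1
    apply Finset.sum_congr rfl
    intro i _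
    rw [Matrix.mulVec_smul]
    simp [hu]
    ring
  have hObjβ : obj X N y β = (1/2) * ∑ i, (u i)^2 + N β := obj_at X N y β
  rw [hObj, hObjβ] at h
  have hsm : N ((1 - t) • β) = (1 - t) * N β := by
    rw [hN.smul, abs_of_pos (by linarith)]
  rw [hsm] at h
  have key : t * N β ≤ t * (dot (X.mulVec β) u + t * ((1/2) * ∑ i, (X.mulVec β i)^2)) := by
    nlinarith [h]
  exact le_of_mul_le_mul_left key ht0

theorem convex_null_set_properties {n p : ℕ} (X : Matrix (Fin n) (Fin p) ℝ)
    (N : (Fin p → ℝ) → ℝ) (hN : IsNorm N) :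
    (∀ u : Fin n → ℝ, dualNorm N (Xᵀ.mulVec u) ≤ 1 →
      {b : Fin p → ℝ | ∀ c, obj X N u b ≤ obj X N u c} = {0}) ∧
    (∀ (y : Fin n → ℝ) (β : Fin p → ℝ), (∀ b, obj X N y β ≤ obj X N y b) →
      dualNorm N (Xᵀ.mulVec (y - X.mulVec β)) ≤ 1 ∧
      ∀ u : Fin n → ℝ, dualNorm N (Xᵀ.mulVec u) ≤ 1 →
        dot (y - (y - X.mulVec β)) (u - (y - X.mulVec β)) ≤ 0) := by
  have hN0 : N 0 = 0 := (hN.eq_zero_iff 0).mpr rfl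
  constructor
  · intro u hu
    have hexp : ∀ c : Fin p → ℝ, obj X N u c =
        (1/2) * (∑ i, (u i)^2 - 2*1*(dot (X.mulVec c) u) + 1^2 * ∑ i, (X.mulVec c i)^2) + N c := by
      intro c
      unfold obj
      rw [← sq_expand]
      congr 1
      congr 1
      apply Finset.sum_congr rfl
      intro i _
      ring
    have hobj0 : obj X N u 0 = (1/2) * ∑ i, (u i)^2 := by
      unfold obj
      simp [hN0]
    have hdot : ∀ c, dot (X.mulVec c) u ≤ N c := by
      intro c
      rw [dot_mulVec]
      exact dot_le_of_dual hN hu c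
    have h0min : ∀ c, obj X N u 0 ≤ obj X N u c := by
      intro c
      rw [hobj0, hexp c]
      have hS : (0:ℝ) ≤ ∑ i, (X.mulVec c i)^2 := Finset.sum_nonneg fun i _ => sq_nonneg _
      nlinarith [hdot c]
    apply Set.eq_singleton_iff_unique_mem.mpr
    constructor
    · exact h0min
    · intro b hb
      have heq : obj X N u b = obj X N u 0 := le_antisymm (hb 0) (h0min b)
      rw [hobj0, hexp b] at heq
      have hS : (0:ℝ) ≤ ∑ i, (X.mulVec b i)^2 := Finset.sum_nonneg fun i _ => sq_nonneg _
      have hS0 : ∑ i, (X.mulVec b i)^2 = 0 := by nlinarith [hdot b]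
      have hz : ∀ i, X.mulVec b i = 0 := by
        intro i
        have := (Finset.sum_eq_zero_iff_of_nonneg (fun i _ => sq_nonneg (X.mulVec b i))).mp
          hS0 i (Finset.mem_univ i)
        exact pow_eq_zero_iff two_ne_zero |>.mp this
      have hdz : dot (X.mulVec b) u = 0 := by
        simp [dot, hz]
      have hNb : N b = 0 := by
        rw [hdz, hS0] at heq
        linarith
      exact (hN.eq_zero_iff b).mp hNb
  · intro y β hmin
    have hc1 := cond1 X hN y β hmin
    have hc2 := cond2 X hN y β hmin
    constructor
    · apply Real.sSup_le _ zero_le_one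
      rintro r ⟨s, hs, rfl⟩
      exact le_trans (hc1 s) hs
    · intro u hu
      rw [sub_sub_cancel, dot_sub_right, dot_mulVec, dot_mulVec]
      have h1 : dot β (Xᵀ.mulVec u) ≤ N β := dot_le_of_dual hN hu β
      linarith
end
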